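/- (Lemma 7) Let L̃ : ℝ^{d} → ℝ be convex and twice continuously differentiable, let θ*_s ∈ ℝ^{d} with support S = supp(θ*_s) and sparsity s₀ = ‖θ*_s‖₀ ≥ 1, and set γ̃_n = ‖∇L̃(θ*_s)‖_∞. Assume there exist r̃ > 0 and β̃ > 0 such that for every θ_s with ‖θ_s − θ*_s‖₂ < r̃ and every v ∈ C_S = {v : ‖v_{S̄}‖₁ ≤ 3‖v_S‖₁}, we have v⊤ ∇²L̃(θ_s) v ≥ β̃‖v‖₂². Let c̃₀ ≥ 2 and λ ∈ [2γ̃_n, c̃₀γ̃_n] with λ > 0, and set γ̃ = 1.5 c̃₀ √(s₀) β̃^{−1} γ̃_n. If γ̃ < r̃, then any global minimizer θ̂_s of θ_s ↦ L̃(θ_s) + λ‖θ_s‖₁ satisfies ‖θ̂_s − θ*_s‖₂ ≤ 1.5 c̃₀ √(s₀) β̃^{−1} γ̃_n. -/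

import Mathlib

/-!
Write `Δ = θ̂ - θ*`. At a point `x = θ* + t Δ` with `t < 1`, the first-order convexity bound for
`L̃` together with the minimality of `θ̂` gives `∇L̃(x)·Δ ≤ λ (‖Δ_S‖₁ - ‖Δ_S̄‖₁)`, because `θ*`
vanishes off `S`. Since `|∇L̃(θ*)·Δ| ≤ γ̃ₙ ‖Δ‖₁ ≤ (λ/2) ‖Δ‖₁`, this yields
`(∇L̃(x) - ∇L̃(θ*))·Δ ≤ (λ/2) (3 ‖Δ_S‖₁ - ‖Δ_S̄‖₁)`; at `t = 0` this is the cone condition `Δ ∈ C_S`.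
If `‖Δ‖₂` exceeded `γ̃`, choose `t` with `t ‖Δ‖₂ = ρ ∈ (γ̃, r̃)`: the restricted Hessian bound along
`[θ*, x]` bounds the left side below by `β̃ t ‖Δ‖₂²`, and Cauchy–Schwarz `‖Δ_S‖₁ ≤ √s₀ ‖Δ‖₂` gives
`β̃ ρ ≤ 1.5 λ √s₀ ≤ β̃ γ̃`, a contradiction.
-/

open Real Finset

theorem ConvexOn.fderiv_apply_le_sub {E : Type*} [NormedAddCommGroup E] [NormedSpace ℝ E]
    {f : E → ℝ} (hf : ConvexOn ℝ Set.univ f) {x : E} (hx : DifferentiableAt ℝ f x) (v : E) :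
    fderiv ℝ f x v ≤ f (x + v) - f x := by
  have hline : ConvexOn ℝ Set.univ (fun t : ℝ => f (x + t • v)) := by
    have h := hf.comp_affineMap (AffineMap.lineMap x (x + v))
    rw [Set.preimage_univ] at h
    refine h.congr fun t _ => ?_
    simp [AffineMap.lineMap_apply_module', add_comm]
  have hderiv : HasDerivAt (fun t : ℝ => f (x + t • v)) (fderiv ℝ f x v) 0 := by
    refine hx.hasFDerivAt.comp_hasDerivAt_of_eq 0 ?_ (by simp)
    simpa using ((hasDerivAt_id (0 : ℝ)).smul_const v).const_add x
  simpa [slope_def_field] using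
    hline.le_slope_of_hasDerivAt (Set.mem_univ 0) (Set.mem_univ 1) one_pos hderiv

theorem sum_abs_compl_sub_sum_abs_le {ι : Type*} [Fintype ι] [DecidableEq ι] (S : Finset ι)
    {x h : ι → ℝ} (hxh : ∀ j ∉ S, 0 ≤ x j * h j) :
    ∑ j ∈ Sᶜ, |h j| - ∑ j ∈ S, |h j| ≤ ∑ j, |x j + h j| - ∑ j, |x j| := by
  have hS : ∑ j ∈ S, -|h j| ≤ ∑ j ∈ S, (|x j + h j| - |x j|) :=
    sum_le_sum fun j _ => by
      have := abs_add_le (x j + h j) (-h j)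
      rw [add_neg_cancel_right, abs_neg] at this
      linarith
  have hSc : ∑ j ∈ Sᶜ, |h j| = ∑ j ∈ Sᶜ, (|x j + h j| - |x j|) :=
    sum_congr rfl fun j hj => by
      rw [(abs_add_eq_add_abs_iff _ _).mpr (mul_nonneg_iff.mp (hxh j (mem_compl.mp hj)))]; ring
  rw [← sum_add_sum_compl S, ← sum_add_sum_compl S (fun j => |x j|)]
  simp only [sum_neg_distrib, sum_sub_distrib] at hS hSc
  linarith

theorem abs_apply_le_mul_sum_abs {ι : Type*} [Fintype ι] [DecidableEq ι]
    (ℓ : (ι → ℝ) →L[ℝ] ℝ) {γ : ℝ} (hℓ : ∀ j, |ℓ (Pi.single j 1)| ≤ γ) (v : ι → ℝ) :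
    |ℓ v| ≤ γ * ∑ j, |v j| := by
  have hexpand : ℓ v = ∑ j, v j * ℓ (Pi.single j 1) := by
    conv_lhs => rw [← univ_sum_single v]
    rw [map_sum]
    refine sum_congr rfl fun j _ => ?_
    rw [← smul_eq_mul, ← map_smul, ← Pi.single_smul', smul_eq_mul, mul_one]
  calc |ℓ v| ≤ ∑ j, |v j * ℓ (Pi.single j 1)| := hexpand ▸ abs_sum_le_sum_abs _ _
    _ ≤ ∑ j, |v j| * γ := sum_le_sum fun j _ => by
        rw [abs_mul]; exact mul_le_mul_of_nonneg_left (hℓ j) (abs_nonneg _)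
    _ = γ * ∑ j, |v j| := by rw [← sum_mul, mul_comm]

theorem sum_abs_le_sqrt_card_mul_sqrt_sum_sq {ι : Type*} [Fintype ι] (S : Finset ι)
    (v : ι → ℝ) : ∑ j ∈ S, |v j| ≤ √(#S : ℝ) * √(∑ j, v j ^ 2) := by
  rw [← sqrt_mul (Nat.cast_nonneg _)]
  refine le_sqrt_of_sq_le ?_
  calc (∑ j ∈ S, |v j|) ^ 2 ≤ #S * ∑ j ∈ S, |v j| ^ 2 := sq_sum_le_card_mul_sum_sq
    _ ≤ #S * ∑ j, v j ^ 2 := by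
        simp only [sq_abs]
        gcongr
        exact subset_univ S

theorem sqrt_sum_sq_add_smul_sub {ι : Type*} [Fintype ι] (x v : ι → ℝ) {s : ℝ} (hs : 0 ≤ s) :
    √(∑ j, ((x + s • v) j - x j) ^ 2) = s * √(∑ j, v j ^ 2) := by
  simp only [Pi.add_apply, Pi.smul_apply, smul_eq_mul, add_sub_cancel_left, mul_pow, ← mul_sum]
  rw [sqrt_mul (sq_nonneg s), sqrt_sq hs]

theorem mul_le_fderiv_sub_fderiv_of_le_hessian {E : Type*} [NormedAddCommGroup E]
    [NormedSpace ℝ E] {f : E → ℝ} (hf : ContDiff ℝ 2 f) (x v : E) {m t : ℝ} (ht : 0 ≤ t)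
    (hm : ∀ s ∈ Set.Icc 0 t, m ≤ fderiv ℝ (fderiv ℝ f) (x + s • v) v v) :
    m * t ≤ fderiv ℝ f (x + t • v) v - fderiv ℝ f x v := by
  have hf' : Differentiable ℝ (fderiv ℝ f) :=
    (hf.fderiv_right (m := 1) (by norm_num)).differentiable one_ne_zero
  have hderiv : ∀ s : ℝ, HasDerivAt (fun s : ℝ => fderiv ℝ f (x + s • v) v)
      (fderiv ℝ (fderiv ℝ f) (x + s • v) v v) s := fun s => by
    have hline : HasDerivAt (fun s : ℝ => x + s • v) v s := by
      simpa using ((hasDerivAt_id s).smul_const v).const_add x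
    simpa using ((hf' _).hasFDerivAt.comp_hasDerivAt s hline).clm_apply (hasDerivAt_const s v)
  have := (convex_Icc 0 t).mul_sub_le_image_sub_of_le_deriv
    (fun s _ => (hderiv s).continuousAt.continuousWithinAt)
    (fun s _ => (hderiv s).differentiableAt.differentiableWithinAt)
    (fun s hs => (hderiv s).deriv ▸ hm s (interior_subset hs))
    0 (by simp [ht]) t (by simp [ht]) ht
  simpa using this

theorem fderiv_add_mul_sum_abs_compl_sub_le_zero {ι : Type*} [Fintype ι] [DecidableEq ι]
    {L : (ι → ℝ) → ℝ} (hL : ConvexOn ℝ Set.univ L) {x : ι → ℝ} (hx : DifferentiableAt ℝ L x)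
    {lam : ℝ} (hlam : 0 ≤ lam) (S : Finset ι) {v : ι → ℝ} (hxv : ∀ j ∉ S, 0 ≤ x j * v j)
    (hle : L (x + v) + lam * ∑ j, |(x + v) j| ≤ L x + lam * ∑ j, |x j|) :
    fderiv ℝ L x v + lam * (∑ j ∈ Sᶜ, |v j| - ∑ j ∈ S, |v j|) ≤ 0 := by
  have hL' := hL.fderiv_apply_le_sub hx v
  have hP := mul_le_mul_of_nonneg_left (sum_abs_compl_sub_sum_abs_le S hxv) hlam
  simp only [Pi.add_apply] at hle
  linarith

section Lasso

variable {ι : Type*} [Fintype ι] [DecidableEq ι] {L : (ι → ℝ) → ℝ} {θstar θhat : ι → ℝ}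
  {S : Finset ι} {lam γ : ℝ}

theorem fderiv_segment_sub_fderiv_le (hL : ConvexOn ℝ Set.univ L) (hdiff : Differentiable ℝ L)
    (hlam : 0 ≤ lam) (hsupp : ∀ j ∉ S, θstar j = 0)
    (hmin : ∀ θ, L θhat + lam * ∑ j, |θhat j| ≤ L θ + lam * ∑ j, |θ j|)
    (hγ : ∀ j, |fderiv ℝ L θstar (Pi.single j 1)| ≤ γ) (hγlam : 2 * γ ≤ lam)
    {t : ℝ} (ht₀ : 0 ≤ t) (ht₁ : t < 1) :
    fderiv ℝ L (θstar + t • (θhat - θstar)) (θhat - θstar) - fderiv ℝ L θstar (θhat - θstar) ≤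
      lam / 2 * (3 * ∑ j ∈ S, |θhat j - θstar j| - ∑ j ∈ Sᶜ, |θhat j - θstar j|) := by
  set Δ := θhat - θstar
  set x := θstar + t • Δ
  have hstep : x + (1 - t) • Δ = θhat := by
    simp only [x, Δ]; module
  have hcoord : ∀ j, |((1 - t) • Δ) j| = (1 - t) * |Δ j| := fun j => by
    rw [Pi.smul_apply, smul_eq_mul, abs_mul, abs_of_pos (sub_pos.mpr ht₁)]
  have hfirst := fderiv_add_mul_sum_abs_compl_sub_le_zero hL (hdiff x) hlam S
    (v := (1 - t) • Δ) (fun j hj => by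
      simp only [x, Pi.add_apply, Pi.smul_apply, smul_eq_mul, hsupp j hj, zero_add]
      nlinarith [mul_nonneg (mul_nonneg ht₀ (sub_pos.mpr ht₁).le) (sq_nonneg (Δ j))])
    (hstep ▸ hmin x)
  simp only [hcoord, ← mul_sum, map_smul, smul_eq_mul] at hfirst
  have hdescent : fderiv ℝ L x Δ + lam * (∑ j ∈ Sᶜ, |Δ j| - ∑ j ∈ S, |Δ j|) ≤ 0 :=
    nonpos_of_mul_nonpos_right (by linarith) (sub_pos.mpr ht₁)
  have hgrad := (abs_le.mp (abs_apply_le_mul_sum_abs _ hγ Δ)).1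
  rw [← sum_add_sum_compl S] at hgrad
  have hγ₀ : 0 ≤ ∑ j ∈ S, |Δ j| + ∑ j ∈ Sᶜ, |Δ j| := by positivity
  change _ ≤ lam / 2 * (3 * ∑ j ∈ S, |Δ j| - ∑ j ∈ Sᶜ, |Δ j|)
  nlinarith [mul_le_mul_of_nonneg_right hγlam hγ₀]

theorem sum_abs_compl_le_three_mul (hL : ConvexOn ℝ Set.univ L) (hdiff : Differentiable ℝ L)
    (hlam : 0 < lam) (hsupp : ∀ j ∉ S, θstar j = 0)
    (hmin : ∀ θ, L θhat + lam * ∑ j, |θhat j| ≤ L θ + lam * ∑ j, |θ j|)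
    (hγ : ∀ j, |fderiv ℝ L θstar (Pi.single j 1)| ≤ γ) (hγlam : 2 * γ ≤ lam) :
    ∑ j ∈ Sᶜ, |θhat j - θstar j| ≤ 3 * ∑ j ∈ S, |θhat j - θstar j| := by
  have h := fderiv_segment_sub_fderiv_le hL hdiff hlam.le hsupp hmin hγ hγlam le_rfl one_pos
  rw [zero_smul, add_zero, sub_self] at h
  nlinarith

theorem mul_radius_le_of_le_hessian (hL : ConvexOn ℝ Set.univ L) (hsmooth : ContDiff ℝ 2 L)
    (hlam : 0 ≤ lam) (hsupp : ∀ j ∉ S, θstar j = 0)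
    (hmin : ∀ θ, L θhat + lam * ∑ j, |θhat j| ≤ L θ + lam * ∑ j, |θ j|)
    (hγ : ∀ j, |fderiv ℝ L θstar (Pi.single j 1)| ≤ γ) (hγlam : 2 * γ ≤ lam) {β ρ : ℝ}
    (hρ₀ : 0 < ρ) (hρ : ρ < √(∑ j, (θhat j - θstar j) ^ 2))
    (hhess : ∀ s, 0 ≤ s → s * √(∑ j, (θhat j - θstar j) ^ 2) ≤ ρ →
      β * ∑ j, (θhat j - θstar j) ^ 2 ≤
        fderiv ℝ (fderiv ℝ L) (θstar + s • (θhat - θstar)) (θhat - θstar) (θhat - θstar)) :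
    β * ρ ≤ 3 / 2 * lam * √(#S : ℝ) := by
  set n := √(∑ j, (θhat j - θstar j) ^ 2)
  have hn : 0 < n := hρ₀.trans hρ
  have hsq : ∑ j, (θhat j - θstar j) ^ 2 = n ^ 2 := (sq_sqrt (by positivity)).symm
  set t := ρ / n
  have htn : t * n = ρ := div_mul_cancel₀ ρ hn.ne'
  have ht₀ : 0 ≤ t := by positivity
  have ht₁ : t < 1 := (div_lt_one hn).mpr hρ
  have hgrowth := mul_le_fderiv_sub_fderiv_of_le_hessian hsmooth θstar _ ht₀
    fun s hs => hsq ▸ hhess s hs.1 (htn ▸ mul_le_mul_of_nonneg_right hs.2 hn.le)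
  have hbound := fderiv_segment_sub_fderiv_le hL (hsmooth.differentiable (by norm_num)) hlam
    hsupp hmin hγ hγlam ht₀ ht₁
  have hCS : ∑ j ∈ S, |θhat j - θstar j| ≤ √(#S : ℝ) * n :=
    sum_abs_le_sqrt_card_mul_sqrt_sum_sq S (θhat - θstar)
  have hb : 0 ≤ ∑ j ∈ Sᶜ, |θhat j - θstar j| := by positivity
  have hρn : β * ρ * n ≤ 3 / 2 * lam * √(#S : ℝ) * n := by
    rw [← htn]
    nlinarith [mul_le_mul_of_nonneg_left hCS hlam]
  exact le_of_mul_le_mul_right hρn hn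

end Lasso

theorem stmt_14_general {d : ℕ} (Ltilde : (Fin d → ℝ) → ℝ)
    (hconv : ConvexOn ℝ Set.univ Ltilde) (hsmooth : ContDiff ℝ 2 Ltilde)
    (θstar : Fin d → ℝ)
    (S : Finset (Fin d)) (hS : S = Finset.univ.filter (fun j => θstar j ≠ 0))
    (s₀ : ℕ) (hs₀def : s₀ = S.card)
    (γn : ℝ) (hγn : γn = ⨆ j, |fderiv ℝ Ltilde θstar (Pi.single j 1)|)
    (rt βt : ℝ) (hβt : 0 < βt)
    (hRSC : ∀ θ : Fin d → ℝ, Real.sqrt (∑ j, (θ j - θstar j) ^ 2) < rt →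
      ∀ v : Fin d → ℝ, (∑ j ∈ Sᶜ, |v j|) ≤ 3 * ∑ j ∈ S, |v j| →
        βt * ∑ j, (v j) ^ 2 ≤ fderiv ℝ (fderiv ℝ Ltilde) θ v v)
    (c₀ : ℝ)
    (lam : ℝ) (hlam_pos : 0 < lam) (hlam₁ : 2 * γn ≤ lam) (hlam₂ : lam ≤ c₀ * γn)
    (hγr : 1.5 * c₀ * Real.sqrt s₀ * βt⁻¹ * γn < rt)
    (θhat : Fin d → ℝ)
    (hmin : ∀ θ, Ltilde θhat + lam * ∑ j, |θhat j| ≤ Ltilde θ + lam * ∑ j, |θ j|) :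
    Real.sqrt (∑ j, (θhat j - θstar j) ^ 2) ≤ 1.5 * c₀ * Real.sqrt s₀ * βt⁻¹ * γn := by
  have hsupp : ∀ j ∉ S, θstar j = 0 := fun j hj => by simpa [hS] using hj
  have hγ : ∀ j, |fderiv ℝ Ltilde θstar (Pi.single j 1)| ≤ γn :=
    fun j => hγn ▸ le_ciSup (f := fun j => |fderiv ℝ Ltilde θstar (Pi.single j 1)|)
      (Set.finite_range _).bddAbove j
  have hcone := sum_abs_compl_le_three_mul hconv (hsmooth.differentiable (by norm_num))
    hlam_pos hsupp hmin hγ hlam₁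
  by_contra! hfar
  obtain ⟨ρ, hρ, hρ_lt⟩ := exists_between (lt_min hγr hfar)
  have hcγ : 0 ≤ c₀ * γn := hlam_pos.le.trans hlam₂
  have hρ₀ : 0 < ρ := by
    refine lt_of_le_of_lt ?_ hρ
    rw [show 1.5 * c₀ * √s₀ * βt⁻¹ * γn = 1.5 * √s₀ * βt⁻¹ * (c₀ * γn) by ring]
    exact mul_nonneg (by positivity) hcγ
  have hradius := mul_radius_le_of_le_hessian hconv hsmooth hlam_pos.le hsupp hmin hγ hlam₁ hρ₀
    (hρ_lt.trans_le (min_le_right _ _)) fun s hs hsρ => hRSC _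
      (((sqrt_sum_sq_add_smul_sub θstar _ hs).trans_le hsρ).trans_lt
        (hρ_lt.trans_le (min_le_left _ _))) _ hcone
  rw [← hs₀def] at hradius
  have hρ_le : ρ ≤ 1.5 * c₀ * √s₀ * βt⁻¹ * γn := by
    rw [show 1.5 * c₀ * √s₀ * βt⁻¹ * γn = 3 / 2 * (c₀ * γn) * √s₀ / βt by field_simp; ring,
      le_div_iff₀ hβt]
    nlinarith [mul_le_mul_of_nonneg_right hlam₂ (sqrt_nonneg (s₀ : ℝ))]
  linarith

/-- (Lemma 7) Estimation error bound for the ℓ₁-penalized node-conditional M-estimator under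
the locally restricted positive definite Hessian condition:
`‖θ̂_s - θ*_s‖₂ ≤ 1.5 c̃₀ √s₀ β̃⁻¹ γ̃_n` whenever `γ̃ = 1.5 c̃₀ √s₀ β̃⁻¹ γ̃_n < r̃`. -/
theorem stmt_14 {d : ℕ} (Ltilde : (Fin d → ℝ) → ℝ)
    (hconv : ConvexOn ℝ Set.univ Ltilde) (hsmooth : ContDiff ℝ 2 Ltilde)
    (θstar : Fin d → ℝ)
    (S : Finset (Fin d)) (hS : S = Finset.univ.filter (fun j => θstar j ≠ 0))
    (s₀ : ℕ) (hs₀def : s₀ = S.card) (hs₀ : 1 ≤ s₀)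
    (γn : ℝ) (hγn : γn = ⨆ j, |fderiv ℝ Ltilde θstar (Pi.single j 1)|)
    (rt βt : ℝ) (hrt : 0 < rt) (hβt : 0 < βt)
    (hRSC : ∀ θ : Fin d → ℝ, Real.sqrt (∑ j, (θ j - θstar j) ^ 2) < rt →
      ∀ v : Fin d → ℝ, (∑ j ∈ Sᶜ, |v j|) ≤ 3 * ∑ j ∈ S, |v j| →
        βt * ∑ j, (v j) ^ 2 ≤ fderiv ℝ (fderiv ℝ Ltilde) θ v v)
    (c₀ : ℝ) (hc₀ : 2 ≤ c₀)
    (lam : ℝ) (hlam_pos : 0 < lam) (hlam₁ : 2 * γn ≤ lam) (hlam₂ : lam ≤ c₀ * γn)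
    (hγr : 1.5 * c₀ * Real.sqrt s₀ * βt⁻¹ * γn < rt)
    (θhat : Fin d → ℝ)
    (hmin : ∀ θ, Ltilde θhat + lam * ∑ j, |θhat j| ≤ Ltilde θ + lam * ∑ j, |θ j|) :
    Real.sqrt (∑ j, (θhat j - θstar j) ^ 2) ≤ 1.5 * c₀ * Real.sqrt s₀ * βt⁻¹ * γn :=
  stmt_14_general Ltilde hconv hsmooth θstar S hS s₀ hs₀def γn hγn rt βt hβt hRSC c₀ lam hlam_pos
    hlam₁ hlam₂ hγr θhat hmin
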